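/- Let n ≥ 1 be an integer and h = 1/(n+1), with the fission matrix C built from cube values w as in the context. Then: (a) if u ∈ ℝ^{n³} is such that for every node (i,j,k) with u_{ijk} ≠ 0 all eight cubes incident to (i,j,k) have w_{pqr} = 0, then Cu = 0; and (b) if v ∈ ℝ^{n³} is such that every node (i,j,k) with v_{ijk} ≠ 0 is incident to at least one cube with w_{pqr} ≠ 0, then w_min·(h³/216)·‖v‖² ≤ vᵀCv ≤ w_max·h³·‖v‖². In particular C is block diagonal with respect to the coordinate decomposition into such nodes, with one block zero and the other block having condition number at most 216·w_max/w_min. -/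

import Mathlib

/-!
The fission matrix is an assembly of cube contributions: `C = ∑_c w_c K_c`, where on the cube
`c = I_p × I_q × I_r` the matrix `K_c = M_p ⊗ M_q ⊗ M_r` is a Kronecker product of 1D mass
matrices, and `M_p = (h/6)·[[2,1],[1,2]]` on the two endpoint nodes of `I_p`. The eigenvalues of
`[[2,1],[1,2]]` are `1` and `3`, so `(h/6) D_p ≤ M_p ≤ (h/2) D_p` in the Loewner order, with
`D_p` the diagonal indicator of the endpoints of `I_p`; Kronecker products of nonnegative
matrices are monotone, hence `(h/6)³ D_c ≤ K_c ≤ (h/2)³ D_c`. Summing with the weights `w_c ≥ 0`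
sandwiches `C` between `(h/6)³ diag(d)` and `(h/2)³ diag(d)`, where `d_N` is the total weight of
the (at most eight) cubes around node `N`. If `u` lives where `d = 0`, then `uᵀCu = 0`, and since
`C` is positive semidefinite, `Cu = 0`; otherwise `w_min ≤ d_N ≤ 8 w_max` gives the bounds.
-/

open MeasureTheory Matrix
open scoped MatrixOrder Kronecker ComplexOrder

section LoewnerOrder

variable {ι κ : Type*} [Fintype ι] [Fintype κ] {𝕜 : Type*} [RCLike 𝕜]

theorem Matrix.kronecker_nonneg {A : Matrix ι ι 𝕜} {B : Matrix κ κ 𝕜} (hA : 0 ≤ A) (hB : 0 ≤ B) :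
    0 ≤ A ⊗ₖ B :=
  (hA.posSemidef.kronecker hB.posSemidef).nonneg

theorem Matrix.kronecker_le_kronecker {A A' : Matrix ι ι 𝕜} {B B' : Matrix κ κ 𝕜}
    (hA : 0 ≤ A) (hAA' : A ≤ A') (hB : 0 ≤ B) (hBB' : B ≤ B') : A ⊗ₖ B ≤ A' ⊗ₖ B' := by
  have hsplit : A' ⊗ₖ B' - A ⊗ₖ B = (A' - A) ⊗ₖ B' + A ⊗ₖ (B' - B) := by
    ext ⟨i, k⟩ ⟨i', k'⟩
    simp only [sub_apply, add_apply, kroneckerMap_apply]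
    ring
  rw [le_iff, hsplit]
  exact ((le_iff.1 hAA').kronecker (hB.trans hBB').posSemidef).add
    (hA.posSemidef.kronecker (le_iff.1 hBB'))

theorem Matrix.dotProduct_mulVec_le_of_le {A B : Matrix ι ι ℝ} (hAB : A ≤ B) (v : ι → ℝ) :
    v ⬝ᵥ A *ᵥ v ≤ v ⬝ᵥ B *ᵥ v := by
  have := (le_iff.1 hAB).dotProduct_mulVec_nonneg v
  rwa [star_trivial, sub_mulVec, dotProduct_sub, sub_nonneg] at this

variable [DecidableEq ι]

theorem Matrix.vecMulVec_le_sum_smul_diagonal {u : ι → ℝ} (hu : 0 ≤ u) :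
    vecMulVec u u ≤ (∑ i, u i) • diagonal u := by
  refine le_iff.2 (.of_dotProduct_mulVec_nonneg (by simp [IsHermitian]) fun x ↦ ?_)
  have hcs : (∑ i, u i * x i) ^ 2 ≤ (∑ i, u i) * ∑ i, u i * x i ^ 2 :=
    Finset.sum_sq_le_sum_mul_sum_of_sq_le_mul _ (fun i _ ↦ hu i)
      (fun i _ ↦ mul_nonneg (hu i) (sq_nonneg _)) (fun i _ ↦ by ring_nf; rfl)
  simp only [star_trivial, sub_mulVec, dotProduct_sub, smul_mulVec, dotProduct_smul,
    vecMulVec_mulVec]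
  simp only [dotProduct, mulVec_diagonal, sub_nonneg, MulOpposite.smul_eq_mul_unop,
    MulOpposite.unop_op, smul_eq_mul]
  calc _ = (∑ i, u i * x i) ^ 2 := by simp only [sq, mul_comm (x _)]
    _ ≤ _ := hcs
    _ = _ := by congr 1; exact Finset.sum_congr rfl fun i _ ↦ by ring

end LoewnerOrder

section DiagonalKronecker

variable {ι κ : Type*} [DecidableEq ι]

theorem Matrix.smul_diagonal_kronecker_smul_diagonal_kronecker_smul_diagonal (a : ℝ)
    (d₁ d₂ d₃ : ι → ℝ) :
    (a • diagonal d₁) ⊗ₖ ((a • diagonal d₂) ⊗ₖ (a • diagonal d₃)) =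
      a ^ 3 • diagonal fun N : ι × ι × ι ↦ d₁ N.1 * (d₂ N.2.1 * d₃ N.2.2) := by
  simp only [smul_kronecker, kronecker_smul, diagonal_kronecker_diagonal, smul_smul]
  ring_nf

theorem Matrix.smul_diagonal_sum_smul [Fintype κ] (a : ℝ) (w : κ → ℝ) (d : κ → ι → ℝ) :
    a • diagonal (∑ c, w c • d c) = ∑ c, w c • a • diagonal (d c) := by
  ext i j
  by_cases hij : i = j <;> simp [hij, Finset.mul_sum, Matrix.sum_apply, mul_left_comm]

end DiagonalKronecker

section QuadraticForm

variable {ι : Type*} [Fintype ι] [DecidableEq ι] {C : Matrix ι ι ℝ} {d : ι → ℝ}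

theorem Matrix.dotProduct_diagonal_mulVec (d v w : ι → ℝ) :
    v ⬝ᵥ diagonal d *ᵥ w = ∑ i, d i * (v i * w i) := by
  simp only [dotProduct, mulVec_diagonal]
  exact Finset.sum_congr rfl fun i _ ↦ by ring

theorem Matrix.mulVec_eq_zero_of_le_diagonal (hC : 0 ≤ C) (hCd : C ≤ diagonal d) {u : ι → ℝ}
    (hu : ∀ i, u i ≠ 0 → d i = 0) : C *ᵥ u = 0 := by
  have hdu : u ⬝ᵥ diagonal d *ᵥ u = 0 := by
    rw [dotProduct_diagonal_mulVec]
    refine Finset.sum_eq_zero fun i _ ↦ ?_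
    by_cases hui : u i = 0
    · simp [hui]
    · simp [hu i hui]
  refine (hC.posSemidef.dotProduct_mulVec_zero_iff u).1 ?_
  rw [star_trivial]
  exact le_antisymm (hdu ▸ dotProduct_mulVec_le_of_le hCd u)
    (by simpa using dotProduct_mulVec_le_of_le hC u)

theorem Matrix.le_dotProduct_mulVec_of_diagonal_le (hdC : diagonal d ≤ C) {m : ℝ} {v : ι → ℝ}
    (hv : ∀ i, v i ≠ 0 → m ≤ d i) : m * (v ⬝ᵥ v) ≤ v ⬝ᵥ C *ᵥ v := by
  refine le_trans ?_ (dotProduct_mulVec_le_of_le hdC v)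
  rw [dotProduct_diagonal_mulVec, dotProduct, Finset.mul_sum]
  refine Finset.sum_le_sum fun i _ ↦ ?_
  by_cases hvi : v i = 0
  · simp [hvi]
  · exact mul_le_mul_of_nonneg_right (hv i hvi) (mul_self_nonneg _)

theorem Matrix.dotProduct_mulVec_le_of_le_diagonal (hCd : C ≤ diagonal d) {M : ℝ} {v : ι → ℝ}
    (hv : ∀ i, v i ≠ 0 → d i ≤ M) : v ⬝ᵥ C *ᵥ v ≤ M * (v ⬝ᵥ v) := by
  refine (dotProduct_mulVec_le_of_le hCd v).trans ?_
  rw [dotProduct_diagonal_mulVec, dotProduct, Finset.mul_sum]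
  refine Finset.sum_le_sum fun i _ ↦ ?_
  by_cases hvi : v i = 0
  · simp [hvi]
  · exact mul_le_mul_of_nonneg_right (hv i hvi) (mul_self_nonneg _)

end QuadraticForm

section UniformMesh

open Set

variable {h : ℝ}

theorem iUnion_Ioc_mesh (m : ℕ) (hh : 0 ≤ h) :
    ⋃ p : Fin m, Ioc ((p : ℝ) * h) ((p + 1) * h) = Ioc 0 (m * h) := by
  have := (Nat.mono_cast.mul_const hh).biUnion_Ico_Ioc_map_succ 0 m
  rw [Nat.cast_zero, zero_mul] at this
  rw [← this]
  ext x
  simp [Fin.exists_iff]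

theorem Icc_ae_eq_iUnion_Ioo_mesh (m : ℕ) (hh : 0 ≤ h) :
    Icc 0 (m * h) =ᵐ[volume] ⋃ p : Fin m, Ioo ((p : ℝ) * h) ((p + 1) * h) :=
  Ioc_ae_eq_Icc.symm.trans <| iUnion_Ioc_mesh m hh ▸
    Filter.EventuallyEq.countable_iUnion fun _ ↦ Ioo_ae_eq_Ioc.symm

theorem pairwise_disjoint_Ioo_mesh (m : ℕ) (hh : 0 ≤ h) :
    Pairwise (Function.onFun Disjoint fun p : Fin m ↦ Ioo ((p : ℝ) * h) ((p + 1) * h)) := by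
  simpa using ((Nat.mono_cast.mul_const hh).pairwise_disjoint_on_Ioo_succ).comp_of_injective
    (Fin.val_injective (n := m))

noncomputable def hat (h : ℝ) (i : ℕ) (x : ℝ) : ℝ :=
  max 0 (1 - |x / h - (i + 1)|)

@[fun_prop]
theorem continuous_hat (h : ℝ) (i : ℕ) : Continuous (hat h i) := by
  unfold hat
  fun_prop

theorem hat_mul_add (hh : 0 < h) (p i : ℕ) {t : ℝ} (ht : t ∈ Icc 0 1) :
    hat h i (h * t + p * h) = if p = i then t else if p = i + 1 then 1 - t else 0 := by
  obtain ⟨ht0, ht1⟩ := ht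
  have hx : (h * t + p * h) / h - (i + 1) = t + ((p : ℝ) - i - 1) := by field_simp; ring
  rw [hat, hx]
  split_ifs with hpi hpi'
  · rw [hpi, abs_of_nonpos (by linarith)]
    simp [ht0]
  · rw [hpi', abs_of_nonneg (by push_cast; linarith)]
    push_cast
    simp [ht1]
  · have : (p : ℝ) + 1 ≤ i ∨ (i : ℝ) + 2 ≤ p := by norm_cast; omega
    refine max_eq_left (sub_nonpos.2 ?_)
    rcases this with hpi | hip
    · exact le_abs.2 (.inr (by linarith))
    · exact le_abs.2 (.inl (by linarith))

end UniformMesh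

section LocalMass

open Set

variable {n : ℕ} {h : ℝ}

/-- Node `i : Fin n` sits at `(i + 1) h`, so it is an endpoint of `[p h, (p + 1) h]` iff
`p = i` or `p = i + 1`. -/
def incidence (p : Fin (n + 1)) (i : Fin n) : ℝ :=
  if (p : ℕ) = i ∨ (p : ℕ) = i + 1 then 1 else 0

theorem incidence_nonneg (p : Fin (n + 1)) : 0 ≤ incidence p := fun i ↦ by
  unfold incidence
  split_ifs <;> norm_num

theorem incidence_ne_zero_iff {p : Fin (n + 1)} {i : Fin n} :
    incidence p i ≠ 0 ↔ (p : ℕ) = i ∨ (p : ℕ) = i + 1 := by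
  unfold incidence
  split_ifs with hpi <;> simp [hpi]

theorem sum_incidence_le_two (p : Fin (n + 1)) : ∑ i, incidence p i ≤ 2 := by
  simp only [incidence, Finset.sum_boole, Nat.cast_le_ofNat]
  rw [← Finset.card_map Fin.valEmbedding]
  refine (Finset.card_le_card fun m hm ↦ ?_).trans (Finset.card_le_two (a := (p : ℕ)) (b := p - 1))
  simp only [Finset.mem_map, Finset.mem_filter, Finset.mem_univ, true_and,
    Fin.valEmbedding_apply] at hm
  simp only [Finset.mem_insert, Finset.mem_singleton]
  omega

theorem sum_incidence_eq_two (i : Fin n) : ∑ p, incidence p i = 2 := by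
  have hpair : ({p | (p : ℕ) = i ∨ (p : ℕ) = i + 1} : Finset (Fin (n + 1))) =
      {i.castSucc, i.succ} := by
    ext p
    simp [Fin.ext_iff]
  simp [incidence, Finset.sum_boole, hpair, Finset.card_pair (Fin.castSucc_lt_succ (i := i)).ne]

/-- The mass matrix of the interval `[p h, (p + 1) h]`: `(h/6)·[[2,1],[1,2]]` on its endpoint
nodes. -/
noncomputable def localMass (h : ℝ) (p : Fin (n + 1)) : Matrix (Fin n) (Fin n) ℝ :=
  (h / 6) • (vecMulVec (incidence p) (incidence p) + diagonal (incidence p))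

theorem localMass_apply (h : ℝ) (p : Fin (n + 1)) (i i' : Fin n) :
    localMass h p i i' =
      h / 6 * (incidence p i * incidence p i' + if i = i' then incidence p i else 0) := by
  simp [localMass, vecMulVec_apply, diagonal_apply]

theorem smul_diagonal_incidence_le_localMass (hh : 0 ≤ h) (p : Fin (n + 1)) :
    (h / 6) • diagonal (incidence p) ≤ localMass h p := by
  rw [localMass, smul_add, le_add_iff_nonneg_left]
  exact smul_nonneg (by positivity) (posSemidef_vecMulVec_self_star _).nonneg

theorem localMass_nonneg (hh : 0 ≤ h) (p : Fin (n + 1)) : 0 ≤ localMass h p :=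
  (smul_nonneg (by positivity) (PosSemidef.diagonal (incidence_nonneg p)).nonneg).trans
    (smul_diagonal_incidence_le_localMass hh p)

theorem localMass_le_smul_diagonal_incidence (hh : 0 ≤ h) (p : Fin (n + 1)) :
    localMass h p ≤ (h / 2) • diagonal (incidence p) := by
  have hD : 0 ≤ diagonal (incidence p) := (PosSemidef.diagonal (incidence_nonneg p)).nonneg
  have hU : vecMulVec (incidence p) (incidence p) ≤ (2 : ℝ) • diagonal (incidence p) :=
    (vecMulVec_le_sum_smul_diagonal (incidence_nonneg p)).trans
      (smul_le_smul_of_nonneg_right (sum_incidence_le_two p) hD)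
  calc localMass h p ≤ (h / 6) • ((2 : ℝ) • diagonal (incidence p) + diagonal (incidence p)) :=
        smul_le_smul_of_nonneg_left (add_le_add hU le_rfl) (by positivity)
    _ = (h / 2) • diagonal (incidence p) := by module

theorem integral_hat_mul_hat (hh : 0 < h) (p : Fin (n + 1)) (i i' : Fin n) :
    ∫ x in Ioo ((p : ℝ) * h) ((p + 1) * h), hat h i x * hat h i' x = localMass h p i i' := by
  have hI : Ioo ((p : ℝ) * h) ((p + 1) * h) = Ioo (h * 0 + p * h) (h * 1 + p * h) := by ring_nf
  have hshape : EqOn (fun t ↦ hat h i (h * t + p * h) * hat h i' (h * t + p * h))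
      (fun t ↦ (if (p : ℕ) = i then t else if (p : ℕ) = i + 1 then 1 - t else 0) *
        (if (p : ℕ) = i' then t else if (p : ℕ) = i' + 1 then 1 - t else 0)) (uIcc 0 1) :=
    fun t ht ↦ by
      rw [uIcc_of_le zero_le_one] at ht
      simp only [hat_mul_add hh _ _ ht]
  rw [hI, ← integral_Ioc_eq_integral_Ioo, ← intervalIntegral.integral_of_le (by linarith),
    ← intervalIntegral.smul_integral_comp_mul_add, smul_eq_mul,
    intervalIntegral.integral_congr hshape, localMass_apply]
  simp only [incidence, Fin.ext_iff]
  -- `∫₀¹ t² = ∫₀¹ (1 - t)² = 1/3` and `∫₀¹ t (1 - t) = 1/6`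
  split_ifs <;> first | omega | norm_num [mul_sub, sub_mul, integral_pow, ← sq,
    intervalIntegral.integral_comp_sub_left (fun x : ℝ ↦ x ^ 2)] <;> ring

end LocalMass

section CubeMass

open Set

theorem setIntegral_prod_prod_mul (f g k : ℝ → ℝ) (s t u : Set ℝ) :
    ∫ z in s ×ˢ t ×ˢ u, f z.1 * (g z.2.1 * k z.2.2) =
      (∫ x in s, f x) * ((∫ y in t, g y) * ∫ z in u, k z) := by
  rw [← setIntegral_prod_mul g k t u]
  exact setIntegral_prod_mul f (fun y : ℝ × ℝ ↦ g y.1 * k y.2) s (t ×ˢ u)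

variable {n : ℕ} {h : ℝ}

/-- Open, because the cross section is only prescribed on the interiors of the cubes. -/
def meshCube (h : ℝ) (c : Fin (n + 1) × Fin (n + 1) × Fin (n + 1)) : Set (ℝ × ℝ × ℝ) :=
  Ioo ((c.1 : ℝ) * h) ((c.1 + 1) * h) ×ˢ Ioo ((c.2.1 : ℝ) * h) ((c.2.1 + 1) * h) ×ˢ
    Ioo ((c.2.2 : ℝ) * h) ((c.2.2 + 1) * h)

theorem measurableSet_meshCube (h : ℝ) (c : Fin (n + 1) × Fin (n + 1) × Fin (n + 1)) :
    MeasurableSet (meshCube h c) :=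
  measurableSet_Ioo.prod (measurableSet_Ioo.prod measurableSet_Ioo)

theorem unitCube_ae_eq_iUnion_meshCube (hh : h = 1 / (n + 1)) :
    Icc (0 : ℝ) 1 ×ˢ Icc (0 : ℝ) 1 ×ˢ Icc (0 : ℝ) 1 =ᵐ[volume] ⋃ c, meshCube (n := n) h c := by
  have h1 : (1 : ℝ) = ((n + 1 : ℕ) : ℝ) * h := by rw [hh]; push_cast; field_simp
  have hI := Icc_ae_eq_iUnion_Ioo_mesh (n + 1) (h := h) (by rw [hh]; positivity)
  rw [← h1] at hI
  have hcubes : ⋃ c, meshCube (n := n) h c =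
      (⋃ p : Fin (n + 1), Ioo ((p : ℝ) * h) ((p + 1) * h)) ×ˢ
      (⋃ p : Fin (n + 1), Ioo ((p : ℝ) * h) ((p + 1) * h)) ×ˢ
      (⋃ p : Fin (n + 1), Ioo ((p : ℝ) * h) ((p + 1) * h)) := by
    ext ⟨x, y, z⟩
    simp [meshCube]
  rw [hcubes]
  exact Measure.set_prod_ae_eq hI (Measure.set_prod_ae_eq hI hI)

theorem pairwise_disjoint_meshCube (hh : 0 ≤ h) :
    Pairwise (Function.onFun Disjoint (meshCube (n := n) h)) := by
  rintro ⟨p, q, r⟩ ⟨p', q', r'⟩ hne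
  have hI := pairwise_disjoint_Ioo_mesh (n + 1) hh
  simp only [meshCube, Function.onFun, disjoint_prod]
  by_cases hp : p = p'
  · by_cases hq : q = q'
    · exact .inr (.inr (hI fun hr ↦ hne (by rw [hp, hq, hr])))
    · exact .inr (.inl (hI hq))
  · exact .inl (hI hp)

noncomputable def cubeMass (h : ℝ) (c : Fin (n + 1) × Fin (n + 1) × Fin (n + 1)) :
    Matrix (Fin n × Fin n × Fin n) (Fin n × Fin n × Fin n) ℝ :=
  localMass h c.1 ⊗ₖ (localMass h c.2.1 ⊗ₖ localMass h c.2.2)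

theorem cubeMass_nonneg (hh : 0 ≤ h) (c : Fin (n + 1) × Fin (n + 1) × Fin (n + 1)) :
    0 ≤ cubeMass h c :=
  kronecker_nonneg (localMass_nonneg hh _)
    (kronecker_nonneg (localMass_nonneg hh _) (localMass_nonneg hh _))

variable {w : Fin (n + 1) × Fin (n + 1) × Fin (n + 1) → ℝ} {f : ℝ × ℝ × ℝ → ℝ}

theorem integrableOn_meshCube (c : Fin (n + 1) × Fin (n + 1) × Fin (n + 1))
    (i j k i' j' k' : Fin n) (hf : EqOn f (fun _ ↦ w c) (meshCube h c)) :
    IntegrableOn (fun z ↦ f z * ((hat h i z.1 * hat h j z.2.1 * hat h k z.2.2) *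
      (hat h i' z.1 * hat h j' z.2.1 * hat h k' z.2.2))) (meshCube h c) := by
  have hcont : Continuous fun z : ℝ × ℝ × ℝ ↦ w c *
      ((hat h i z.1 * hat h j z.2.1 * hat h k z.2.2) *
        (hat h i' z.1 * hat h j' z.2.1 * hat h k' z.2.2)) := by
    fun_prop
  have hclosure : meshCube h c ⊆ Icc ((c.1 : ℝ) * h) ((c.1 + 1) * h) ×ˢ
      Icc ((c.2.1 : ℝ) * h) ((c.2.1 + 1) * h) ×ˢ Icc ((c.2.2 : ℝ) * h) ((c.2.2 + 1) * h) :=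
    prod_mono Ioo_subset_Icc_self (prod_mono Ioo_subset_Icc_self Ioo_subset_Icc_self)
  refine ((hcont.continuousOn.integrableOn_compact
    (isCompact_Icc.prod (isCompact_Icc.prod isCompact_Icc))).mono_set hclosure).congr_fun
    (fun z hz ↦ ?_) (measurableSet_meshCube h c)
  simp only [hf hz]

theorem setIntegral_meshCube (hh : 0 < h) (c : Fin (n + 1) × Fin (n + 1) × Fin (n + 1))
    (i j k i' j' k' : Fin n) (hf : EqOn f (fun _ ↦ w c) (meshCube h c)) :
    ∫ z in meshCube h c, f z * ((hat h i z.1 * hat h j z.2.1 * hat h k z.2.2) *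
      (hat h i' z.1 * hat h j' z.2.1 * hat h k' z.2.2)) =
      w c * cubeMass h c (i, j, k) (i', j', k') := by
  rw [setIntegral_congr_fun (measurableSet_meshCube h c) (g := fun z ↦ w c *
      ((hat h i z.1 * hat h i' z.1) * ((hat h j z.2.1 * hat h j' z.2.1) *
        (hat h k z.2.2 * hat h k' z.2.2)))) fun z hz ↦ by simp only [hf hz]; ring,
    integral_const_mul, meshCube, setIntegral_prod_prod_mul (fun x ↦ hat h i x * hat h i' x)
      (fun y ↦ hat h j y * hat h j' y) (fun z ↦ hat h k z * hat h k' z),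
    integral_hat_mul_hat hh, integral_hat_mul_hat hh, integral_hat_mul_hat hh]
  rfl

theorem eq_sum_smul_cubeMass (hh : h = 1 / (n + 1))
    (hf : ∀ c, EqOn f (fun _ ↦ w c) (meshCube h c))
    {C : Matrix (Fin n × Fin n × Fin n) (Fin n × Fin n × Fin n) ℝ}
    (hC : ∀ i j k i' j' k', C (i, j, k) (i', j', k') =
      ∫ z in Icc (0 : ℝ) 1 ×ˢ Icc (0 : ℝ) 1 ×ˢ Icc (0 : ℝ) 1,
        f z * ((hat h i z.1 * hat h j z.2.1 * hat h k z.2.2) *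
          (hat h i' z.1 * hat h j' z.2.1 * hat h k' z.2.2))) :
    C = ∑ c, w c • cubeMass h c := by
  have hh0 : 0 < h := by rw [hh]; positivity
  ext ⟨i, j, k⟩ ⟨i', j', k'⟩
  rw [hC, setIntegral_congr_set (unitCube_ae_eq_iUnion_meshCube hh),
    integral_iUnion_fintype (measurableSet_meshCube h) (pairwise_disjoint_meshCube hh0.le)
      fun c ↦ integrableOn_meshCube c i j k i' j' k' (hf c)]
  simp only [setIntegral_meshCube hh0 _ _ _ _ _ _ _ (hf _), Matrix.sum_apply, Matrix.smul_apply,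
    smul_eq_mul]

end CubeMass

section CubeIncidence

variable {n : ℕ}

def cubeIncidence (c : Fin (n + 1) × Fin (n + 1) × Fin (n + 1)) (N : Fin n × Fin n × Fin n) :
    ℝ :=
  incidence c.1 N.1 * (incidence c.2.1 N.2.1 * incidence c.2.2 N.2.2)

theorem cubeIncidence_nonneg (c : Fin (n + 1) × Fin (n + 1) × Fin (n + 1)) :
    0 ≤ cubeIncidence c :=
  fun _ ↦ mul_nonneg (incidence_nonneg _ _)
    (mul_nonneg (incidence_nonneg _ _) (incidence_nonneg _ _))

theorem cubeIncidence_ne_zero_iff {p q r : Fin (n + 1)} {i j k : Fin n} :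
    cubeIncidence (p, q, r) (i, j, k) ≠ 0 ↔ ((p : ℕ) = i ∨ (p : ℕ) = i + 1) ∧
      ((q : ℕ) = j ∨ (q : ℕ) = j + 1) ∧ ((r : ℕ) = k ∨ (r : ℕ) = k + 1) := by
  simp only [cubeIncidence, mul_ne_zero_iff, incidence_ne_zero_iff]

theorem cubeIncidence_of_ne_zero {c : Fin (n + 1) × Fin (n + 1) × Fin (n + 1)}
    {N : Fin n × Fin n × Fin n} (hc : cubeIncidence c N ≠ 0) : cubeIncidence c N = 1 := by
  revert hc
  simp only [cubeIncidence, incidence]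
  split_ifs <;> simp

theorem sum_cubeIncidence (N : Fin n × Fin n × Fin n) : ∑ c, cubeIncidence c N = 8 := by
  simp only [cubeIncidence, Fintype.sum_prod_type, ← Finset.mul_sum, ← Finset.sum_mul,
    sum_incidence_eq_two]
  norm_num

variable {h : ℝ}

theorem smul_diagonal_cubeIncidence_le_cubeMass (hh : 0 ≤ h)
    (c : Fin (n + 1) × Fin (n + 1) × Fin (n + 1)) :
    (h / 6) ^ 3 • diagonal (cubeIncidence c) ≤ cubeMass h c := by
  have hD : ∀ p : Fin (n + 1), 0 ≤ (h / 6) • diagonal (incidence p) := fun p ↦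
    smul_nonneg (by positivity) (PosSemidef.diagonal (incidence_nonneg p)).nonneg
  have hM := smul_diagonal_incidence_le_localMass (n := n) hh
  unfold cubeIncidence cubeMass
  rw [← smul_diagonal_kronecker_smul_diagonal_kronecker_smul_diagonal]
  exact kronecker_le_kronecker (hD _) (hM _) (kronecker_nonneg (hD _) (hD _))
    (kronecker_le_kronecker (hD _) (hM _) (hD _) (hM _))

theorem cubeMass_le_smul_diagonal_cubeIncidence (hh : 0 ≤ h)
    (c : Fin (n + 1) × Fin (n + 1) × Fin (n + 1)) :
    cubeMass h c ≤ (h / 2) ^ 3 • diagonal (cubeIncidence c) := by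
  have hM := localMass_nonneg (n := n) hh
  have hM' := localMass_le_smul_diagonal_incidence (n := n) hh
  unfold cubeIncidence cubeMass
  rw [← smul_diagonal_kronecker_smul_diagonal_kronecker_smul_diagonal]
  exact kronecker_le_kronecker (hM _) (hM' _) (kronecker_nonneg (hM _) (hM _))
    (kronecker_le_kronecker (hM _) (hM' _) (hM _) (hM' _))

variable {w : Fin (n + 1) × Fin (n + 1) × Fin (n + 1) → ℝ}

theorem diagonal_le_sum_smul_cubeMass (hh : 0 ≤ h) (hw : 0 ≤ w) :
    diagonal ((h / 6) ^ 3 • ∑ c, w c • cubeIncidence c) ≤ ∑ c, w c • cubeMass h c := by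
  rw [diagonal_smul, smul_diagonal_sum_smul]
  exact Finset.sum_le_sum fun c _ ↦
    smul_le_smul_of_nonneg_left (smul_diagonal_cubeIncidence_le_cubeMass hh c) (hw c)

theorem sum_smul_cubeMass_le_diagonal (hh : 0 ≤ h) (hw : 0 ≤ w) :
    ∑ c, w c • cubeMass h c ≤ diagonal ((h / 2) ^ 3 • ∑ c, w c • cubeIncidence c) := by
  rw [diagonal_smul, smul_diagonal_sum_smul]
  exact Finset.sum_le_sum fun c _ ↦
    smul_le_smul_of_nonneg_left (cubeMass_le_smul_diagonal_cubeIncidence hh c) (hw c)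

variable (N : Fin n × Fin n × Fin n)

theorem sum_smul_cubeIncidence_apply :
    (∑ c, w c • cubeIncidence c) N = ∑ c, w c * cubeIncidence c N := by
  simp [Finset.sum_apply]

theorem sum_smul_cubeIncidence_eq_zero (hw : ∀ c, cubeIncidence c N ≠ 0 → w c = 0) :
    (∑ c, w c • cubeIncidence c) N = 0 := by
  rw [sum_smul_cubeIncidence_apply]
  refine Finset.sum_eq_zero fun c _ ↦ ?_
  by_cases hc : cubeIncidence c N = 0
  · rw [hc, mul_zero]
  · rw [hw c hc, zero_mul]

theorem le_sum_smul_cubeIncidence (hw : 0 ≤ w) {c} (hc : cubeIncidence c N ≠ 0) :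
    w c ≤ (∑ c, w c • cubeIncidence c) N := by
  rw [sum_smul_cubeIncidence_apply]
  calc w c = w c * cubeIncidence c N := by rw [cubeIncidence_of_ne_zero hc, mul_one]
    _ ≤ _ := Finset.single_le_sum (f := fun c ↦ w c * cubeIncidence c N)
        (fun c _ ↦ mul_nonneg (hw c) (cubeIncidence_nonneg c N)) (Finset.mem_univ c)

theorem sum_smul_cubeIncidence_le {M : ℝ} (hw : ∀ c, w c ≤ M) :
    (∑ c, w c • cubeIncidence c) N ≤ 8 * M := by
  calc (∑ c, w c • cubeIncidence c) N ≤ ∑ c, M * cubeIncidence c N := by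
        rw [sum_smul_cubeIncidence_apply]
        exact Finset.sum_le_sum fun c _ ↦
          mul_le_mul_of_nonneg_right (hw c) (cubeIncidence_nonneg c N)
    _ = 8 * M := by rw [← Finset.mul_sum, sum_cubeIncidence, mul_comm]

end CubeIncidence

theorem stmt7_general (n : ℕ) (h : ℝ) (hh : h = 1 / ((n : ℝ) + 1))
    (φ : Fin n → ℝ → ℝ)
    (hφ : ∀ (i : Fin n) (x : ℝ), φ i x = max 0 (1 - |x / h - ((i.val : ℝ) + 1)|))
    (w : Fin (n + 1) × Fin (n + 1) × Fin (n + 1) → ℝ) (wmin wmax : ℝ)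
    (hwmin : 0 < wmin) (hwminmax : wmin ≤ wmax)
    (hw : ∀ c, w c = 0 ∨ (wmin ≤ w c ∧ w c ≤ wmax))
    (nSf : ℝ × ℝ × ℝ → ℝ)
    (hnSf : ∀ (p q r : Fin (n + 1)) (x y z : ℝ),
      (p.val : ℝ) * h < x → x < ((p.val : ℝ) + 1) * h →
      (q.val : ℝ) * h < y → y < ((q.val : ℝ) + 1) * h →
      (r.val : ℝ) * h < z → z < ((r.val : ℝ) + 1) * h →
      nSf (x, y, z) = w (p, q, r))
    (C : Matrix (Fin n × Fin n × Fin n) (Fin n × Fin n × Fin n) ℝ)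
    (hC : ∀ i j k i' j' k', C (i, j, k) (i', j', k') =
      ∫ p in (Set.Icc (0:ℝ) 1) ×ˢ (Set.Icc (0:ℝ) 1) ×ˢ (Set.Icc (0:ℝ) 1),
        nSf p * ((φ i p.1 * φ j p.2.1 * φ k p.2.2) *
          (φ i' p.1 * φ j' p.2.1 * φ k' p.2.2))) :
    (∀ u : Fin n × Fin n × Fin n → ℝ,
      (∀ i j k, u (i, j, k) ≠ 0 → ∀ p q r : Fin (n + 1),
        (p.val = i.val ∨ p.val = i.val + 1) →
        (q.val = j.val ∨ q.val = j.val + 1) →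
        (r.val = k.val ∨ r.val = k.val + 1) → w (p, q, r) = 0) →
      C.mulVec u = 0) ∧
    (∀ v : Fin n × Fin n × Fin n → ℝ,
      (∀ i j k, v (i, j, k) ≠ 0 → ∃ p q r : Fin (n + 1),
        (p.val = i.val ∨ p.val = i.val + 1) ∧
        (q.val = j.val ∨ q.val = j.val + 1) ∧
        (r.val = k.val ∨ r.val = k.val + 1) ∧ w (p, q, r) ≠ 0) →
      wmin * (h ^ 3 / 216) * (v ⬝ᵥ v) ≤ v ⬝ᵥ C.mulVec v ∧
      v ⬝ᵥ C.mulVec v ≤ wmax * h ^ 3 * (v ⬝ᵥ v)) := by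
  obtain rfl : φ = fun i : Fin n ↦ hat h i := funext₂ hφ
  have hh0 : 0 < h := by rw [hh]; positivity
  have hw0 : 0 ≤ w := fun c ↦ (hw c).elim ge_of_eq fun hc ↦ hwmin.le.trans hc.1
  have hC_eq : C = ∑ c, w c • cubeMass h c :=
    eq_sum_smul_cubeMass hh (fun c ⟨x, y, z⟩ ⟨⟨hx, hx'⟩, ⟨hy, hy'⟩, hz, hz'⟩ ↦
      hnSf _ _ _ x y z hx hx' hy hy' hz hz') hC
  have hlow := hC_eq ▸ diagonal_le_sum_smul_cubeMass hh0.le hw0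
  have hup := hC_eq ▸ sum_smul_cubeMass_le_diagonal hh0.le hw0
  refine ⟨fun u hu ↦ ?_, fun v hv ↦ ⟨?_, ?_⟩⟩
  · have hC0 : 0 ≤ C :=
      hC_eq ▸ Finset.sum_nonneg fun c _ ↦ smul_nonneg (hw0 c) (cubeMass_nonneg hh0.le c)
    refine mulVec_eq_zero_of_le_diagonal hC0 hup fun ⟨i, j, k⟩ hN ↦ ?_
    have hwN : ∀ c, cubeIncidence c (i, j, k) ≠ 0 → w c = 0 := fun ⟨p, q, r⟩ hc ↦ by
      obtain ⟨hp, hq, hr⟩ := cubeIncidence_ne_zero_iff.1 hc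
      exact hu i j k hN p q r hp hq hr
    rw [Pi.smul_apply, sum_smul_cubeIncidence_eq_zero _ hwN, smul_zero]
  · refine le_dotProduct_mulVec_of_diagonal_le hlow fun ⟨i, j, k⟩ hN ↦ ?_
    obtain ⟨p, q, r, hp, hq, hr, hwc⟩ := hv i j k hN
    have hle := le_sum_smul_cubeIncidence _ hw0 (cubeIncidence_ne_zero_iff.2 ⟨hp, hq, hr⟩)
    rw [Pi.smul_apply, smul_eq_mul]
    calc wmin * (h ^ 3 / 216) = (h / 6) ^ 3 * wmin := by ring
      _ ≤ _ := by gcongr; exact ((hw _).resolve_left hwc).1.trans hle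
  · have hwmax : ∀ c, w c ≤ wmax :=
      fun c ↦ (hw c).elim (fun hc ↦ hc ▸ hwmin.le.trans hwminmax) (·.2)
    refine dotProduct_mulVec_le_of_le_diagonal hup fun N _ ↦ ?_
    rw [Pi.smul_apply, smul_eq_mul]
    calc (h / 2) ^ 3 * _ ≤ (h / 2) ^ 3 * (8 * wmax) := by
          gcongr; exact sum_smul_cubeIncidence_le N hwmax
      _ = wmax * h ^ 3 := by ring

/-- **Block structure and spectral bounds of the fission matrix `C`.**
With `n ≥ 1`, `h = 1/(n+1)`, 3D hat functions `φ_{ijk}` (nodes `(i,j,k)` represented by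
`i.val+1` etc.), cubes `c_{pqr} = [(p−1)h, ph]×[(q−1)h, qh]×[(r−1)h, rh]` for
`(p,q,r) ∈ {1,…,n+1}³` (represented by `p.val+1` etc.; node `(i,j,k)` is incident to
cube `(p,q,r)` iff `p.val = i.val ∨ p.val = i.val+1`, etc.), cube values `w` each either
`0` or in `[w_min, w_max]` with `0 < w_min ≤ w_max`, a function `νΣ_f` equal to `w_{pqr}`
on the interior of each cube, and
`C_{(i,j,k),(i',j',k')} = ∫_{[0,1]³} νΣ_f φ_{ijk} φ_{i'j'k'}`:
(a) if every node where `u` is nonzero has all eight incident cubes with `w = 0`,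
then `Cu = 0`; (b) if every node where `v` is nonzero is incident to at least one cube
with `w ≠ 0`, then `w_min·(h³/216)·‖v‖² ≤ vᵀCv ≤ w_max·h³·‖v‖²`. -/
theorem stmt7 (n : ℕ) (hn : 1 ≤ n) (h : ℝ) (hh : h = 1 / ((n : ℝ) + 1))
    (φ : Fin n → ℝ → ℝ)
    (hφ : ∀ (i : Fin n) (x : ℝ), φ i x = max 0 (1 - |x / h - ((i.val : ℝ) + 1)|))
    (w : Fin (n + 1) × Fin (n + 1) × Fin (n + 1) → ℝ) (wmin wmax : ℝ)
    (hwmin : 0 < wmin) (hwminmax : wmin ≤ wmax)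
    (hw : ∀ c, w c = 0 ∨ (wmin ≤ w c ∧ w c ≤ wmax))
    (nSf : ℝ × ℝ × ℝ → ℝ) (hnSfmeas : Measurable nSf)
    (hnSf : ∀ (p q r : Fin (n + 1)) (x y z : ℝ),
      (p.val : ℝ) * h < x → x < ((p.val : ℝ) + 1) * h →
      (q.val : ℝ) * h < y → y < ((q.val : ℝ) + 1) * h →
      (r.val : ℝ) * h < z → z < ((r.val : ℝ) + 1) * h →
      nSf (x, y, z) = w (p, q, r))
    (C : Matrix (Fin n × Fin n × Fin n) (Fin n × Fin n × Fin n) ℝ)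
    (hC : ∀ i j k i' j' k', C (i, j, k) (i', j', k') =
      ∫ p in (Set.Icc (0:ℝ) 1) ×ˢ (Set.Icc (0:ℝ) 1) ×ˢ (Set.Icc (0:ℝ) 1),
        nSf p * ((φ i p.1 * φ j p.2.1 * φ k p.2.2) *
          (φ i' p.1 * φ j' p.2.1 * φ k' p.2.2))) :
    (∀ u : Fin n × Fin n × Fin n → ℝ,
      (∀ i j k, u (i, j, k) ≠ 0 → ∀ p q r : Fin (n + 1),
        (p.val = i.val ∨ p.val = i.val + 1) →
        (q.val = j.val ∨ q.val = j.val + 1) →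
        (r.val = k.val ∨ r.val = k.val + 1) → w (p, q, r) = 0) →
      C.mulVec u = 0) ∧
    (∀ v : Fin n × Fin n × Fin n → ℝ,
      (∀ i j k, v (i, j, k) ≠ 0 → ∃ p q r : Fin (n + 1),
        (p.val = i.val ∨ p.val = i.val + 1) ∧
        (q.val = j.val ∨ q.val = j.val + 1) ∧
        (r.val = k.val ∨ r.val = k.val + 1) ∧ w (p, q, r) ≠ 0) →
      wmin * (h ^ 3 / 216) * (v ⬝ᵥ v) ≤ v ⬝ᵥ C.mulVec v ∧
      v ⬝ᵥ C.mulVec v ≤ wmax * h ^ 3 * (v ⬝ᵥ v)) :=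
  stmt7_general n h hh φ hφ w wmin wmax hwmin hwminmax hw nSf hnSf C hC
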